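/- Let θ ∈ ℝ^d be a point at which the training loss f of the non-linear fully connected network coincides, on an open set containing θ, with the fixed-activation-pattern function θ ↦ (1/|S|) Σ_i ℓ((D'_{i,*}W_*)_{n:1} x_i, y_i), and suppose the weight matrices of θ satisfy the approximate balance condition |‖W_{j′}‖_F² − ‖W_j‖_F²| ≤ ε² for all j, j′ ∈ {1,…,n}, for some ε > 0 (this condition is conserved along gradient flow trajectories of f emanating from any point θ_s with ‖θ_s‖₂ ≤ ε). Then λ_min(∇²f(θ)) ≥ −max{|α|, |ᾱ|}^{n−1} · ((n−1)/|S|) · Σ_{i=1}^{|S|} ‖∇ℓ_i‖₂·‖x_i‖₂ · ( min_{j∈{1,…,n}} ‖W_j‖_F + ε )^{n−2}. -/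

import Mathlib

open scoped RealInnerProductSpace
open Matrix

noncomputable section

/-- The family of weight matrices of a depth-`n` fully connected network with layer widths
`dims 0, dims 1, …, dims n`: `W j` maps `ℝ^{dims j}` to `ℝ^{dims (j+1)}` (zero-indexed). -/
abbrev WeightFam (n : ℕ) (dims : ℕ → ℕ) : Type :=
  ∀ j : Fin n, Matrix (Fin (dims (j.val + 1))) (Fin (dims j.val)) ℝ

/-- Rectangular matrix with ones on the diagonal: equals the identity matrix whenever the
two dimensions coincide. -/
def castId (p q : ℕ) : Matrix (Fin p) (Fin q) ℝ :=
  Matrix.of fun i j => if (i : ℕ) = (j : ℕ) then 1 else 0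

/-- Multiplication of a Euclidean vector by a matrix. -/
def mulVecE {p q : ℕ} (M : Matrix (Fin p) (Fin q) ℝ) (v : EuclideanSpace ℝ (Fin q)) :
    EuclideanSpace ℝ (Fin p) :=
  (EuclideanSpace.equiv (Fin p) ℝ).symm (M.mulVec (EuclideanSpace.equiv (Fin q) ℝ v))

/-- The homogeneous activation `σ(z) = α·max{z,0} - α'·max{-z,0}`. -/
def actFn (α α' : ℝ) (z : ℝ) : ℝ := α * max z 0 - α' * max (-z) 0

/-- Entrywise application of the activation. -/
def actVec (α α' : ℝ) {p : ℕ} (v : EuclideanSpace ℝ (Fin p)) : EuclideanSpace ℝ (Fin p) :=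
  (EuclideanSpace.equiv (Fin p) ℝ).symm fun i => actFn α α' (v i)

/-- Forward pass of the network: the output of layer `k` on input `x`, the activation being
applied after every layer except the last one. -/
def layerOut {n : ℕ} (α α' : ℝ) (dims : ℕ → ℕ) (W : WeightFam n dims)
    (x : EuclideanSpace ℝ (Fin (dims 0))) : (k : ℕ) → EuclideanSpace ℝ (Fin (dims k))
  | 0 => x
  | k + 1 =>
      if hk : k < n then
        if k + 1 = n then mulVecE (W ⟨k, hk⟩) (layerOut α α' dims W x k)
        else actVec α α' (mulVecE (W ⟨k, hk⟩) (layerOut α α' dims W x k))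
      else 0

/-- The training loss of the fully connected neural network with activation `σ`:
`f(θ) = (1/|S|) ∑ᵢ ℓ(h_θ(xᵢ), yᵢ)`. -/
def netLossNL {Y : Type*} {s : ℕ} {n d : ℕ} (dims : ℕ → ℕ) (α α' : ℝ)
    (loss : EuclideanSpace ℝ (Fin (dims n)) → Y → ℝ)
    (x : Fin s → EuclideanSpace ℝ (Fin (dims 0))) (y : Fin s → Y)
    (arr : EuclideanSpace ℝ (Fin d) →ₗ[ℝ] WeightFam n dims)
    (θ : EuclideanSpace ℝ (Fin d)) : ℝ :=
  (1 / (s : ℝ)) * ∑ i, loss (layerOut α α' dims (arr θ) (x i) n) (y i)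

/-- `segProdD dims W D a b = (D_b W_{b-1}) · (D_{b-1} W_{b-2}) ⋯ (D_{a+1} W_a)`
(zero-indexed weight matrices, `D k` being the diagonal entries of the activation-pattern
matrix at level `k`): the paper's fixed-pattern product `(D'_{i,*} W_*)_{b : a+1}`
(one-indexed), empty products being identity matrices. -/
def segProdD {n : ℕ} (dims : ℕ → ℕ) (W : WeightFam n dims)
    (D : (j : ℕ) → Fin (dims j) → ℝ) (a : ℕ) :
    (b : ℕ) → Matrix (Fin (dims b)) (Fin (dims a)) ℝ
  | 0 => castId (dims 0) (dims a)
  | b + 1 =>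
      if a = b + 1 then castId (dims (b + 1)) (dims a)
      else if hb : b < n then
        Matrix.diagonal (D (b + 1)) * W ⟨b, hb⟩ * segProdD dims W D a b
      else 0

/-- The fixed-activation-pattern loss
`θ ↦ (1/|S|) ∑ᵢ ℓ((D'_{i,*}W_*)_{n:1} xᵢ, yᵢ)`. -/
def patLoss {Y : Type*} {s : ℕ} {n d : ℕ} (dims : ℕ → ℕ)
    (loss : EuclideanSpace ℝ (Fin (dims n)) → Y → ℝ)
    (x : Fin s → EuclideanSpace ℝ (Fin (dims 0))) (y : Fin s → Y)
    (D : Fin s → (j : ℕ) → Fin (dims j) → ℝ)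
    (arr : EuclideanSpace ℝ (Fin d) →ₗ[ℝ] WeightFam n dims)
    (θ : EuclideanSpace ℝ (Fin d)) : ℝ :=
  (1 / (s : ℝ)) * ∑ i, loss (mulVecE (segProdD dims (arr θ) (D i) 0 n) (x i)) (y i)

/-- The Hessian of `f` at `x`, regarded as a quadratic form, evaluated at `v`. -/
def hessQ {E : Type*} [NormedAddCommGroup E] [InnerProductSpace ℝ E] [CompleteSpace E]
    (f : E → ℝ) (x v : E) : ℝ :=
  ⟪v, fderiv ℝ (gradient f) x v⟫

/-- Frobenius norm of a matrix. -/
def frobNorm {p q : ℕ} (M : Matrix (Fin p) (Fin q) ℝ) : ℝ :=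
  Real.sqrt (∑ i, ∑ j, M i j ^ 2)

open Filter Topology

lemma mulVecE_apply {p q : ℕ} (M : Matrix (Fin p) (Fin q) ℝ) (v : EuclideanSpace ℝ (Fin q))
    (i : Fin p) : mulVecE M v i = ∑ j, M i j * v j := by
  simp [mulVecE, Matrix.mulVec, dotProduct]

lemma euclid_norm_sq {p : ℕ} (v : EuclideanSpace ℝ (Fin p)) : ‖v‖ ^ 2 = ∑ i, v i ^ 2 := by
  rw [EuclideanSpace.norm_eq, Real.sq_sqrt (by positivity)]
  simp [sq_abs]

lemma frobNorm_nonneg {p q : ℕ} (M : Matrix (Fin p) (Fin q) ℝ) : 0 ≤ frobNorm M :=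
  Real.sqrt_nonneg _

lemma norm_mulVecE_le {p q : ℕ} (M : Matrix (Fin p) (Fin q) ℝ) (v : EuclideanSpace ℝ (Fin q)) :
    ‖mulVecE M v‖ ≤ frobNorm M * ‖v‖ := by
  have h1 : ‖mulVecE M v‖ ^ 2 ≤ (frobNorm M * ‖v‖) ^ 2 := by
    rw [euclid_norm_sq, mul_pow, frobNorm, Real.sq_sqrt (by positivity), euclid_norm_sq,
      Finset.sum_mul]
    refine Finset.sum_le_sum fun i _ => ?_
    rw [mulVecE_apply]
    exact Finset.sum_mul_sq_le_sq_mul_sq _ _ _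
  nlinarith [norm_nonneg (mulVecE M v), mul_nonneg (frobNorm_nonneg M) (norm_nonneg v)]

/-- `mulVecE` as a continuous linear map in the vector. -/
def mulVecL {p q : ℕ} (M : Matrix (Fin p) (Fin q) ℝ) :
    EuclideanSpace ℝ (Fin q) →L[ℝ] EuclideanSpace ℝ (Fin p) :=
  LinearMap.toContinuousLinearMap
    { toFun := mulVecE M
      map_add' := fun u w => by
        ext i; simp [mulVecE_apply, mul_add, Finset.sum_add_distrib]
      map_smul' := fun r u => by
        ext i; simp [mulVecE_apply, Finset.mul_sum]; ring_nf
        exact Finset.sum_congr rfl fun j _ => by ring }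

@[simp] lemma mulVecL_apply {p q : ℕ} (M : Matrix (Fin p) (Fin q) ℝ)
    (v : EuclideanSpace ℝ (Fin q)) : mulVecL M v = mulVecE M v := rfl

/-- diagonal scaling as a continuous linear map. -/
def dvecL {p : ℕ} (dg : Fin p → ℝ) :
    EuclideanSpace ℝ (Fin p) →L[ℝ] EuclideanSpace ℝ (Fin p) :=
  LinearMap.toContinuousLinearMap
    { toFun := fun v => (EuclideanSpace.equiv (Fin p) ℝ).symm fun i => dg i * v i
      map_add' := fun u w => by ext i; simp; ring
      map_smul' := fun r u => by ext i; simp; ring }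

@[simp] lemma dvecL_apply {p : ℕ} (dg : Fin p → ℝ) (v : EuclideanSpace ℝ (Fin p)) (i : Fin p) :
    dvecL dg v i = dg i * v i := rfl

lemma norm_dvecL_le {p : ℕ} (dg : Fin p → ℝ) (c : ℝ) (hc : 0 ≤ c)
    (h : ∀ i, |dg i| ≤ c) (v : EuclideanSpace ℝ (Fin p)) : ‖dvecL dg v‖ ≤ c * ‖v‖ := by
  have h1 : ‖dvecL dg v‖ ^ 2 ≤ (c * ‖v‖) ^ 2 := by
    rw [euclid_norm_sq, mul_pow, euclid_norm_sq, Finset.mul_sum]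
    refine Finset.sum_le_sum fun i _ => ?_
    have := h i
    have h2 : dg i ^ 2 ≤ c ^ 2 := by nlinarith [abs_nonneg (dg i), sq_abs (dg i)]
    simp only [dvecL_apply, mul_pow]
    nlinarith [sq_nonneg (v i)]
  nlinarith [norm_nonneg (dvecL dg v), mul_nonneg hc (norm_nonneg v)]

lemma mulVecE_mul {p q r : ℕ} (A : Matrix (Fin p) (Fin q) ℝ) (B : Matrix (Fin q) (Fin r) ℝ)
    (v : EuclideanSpace ℝ (Fin r)) : mulVecE (A * B) v = mulVecE A (mulVecE B v) := by
  ext i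
  simp only [mulVecE]
  rw [← Matrix.mulVec_mulVec]
  rfl

lemma mulVecE_diagonal {p : ℕ} (dg : Fin p → ℝ) (v : EuclideanSpace ℝ (Fin p)) :
    mulVecE (Matrix.diagonal dg) v = dvecL dg v := by
  ext i
  rw [mulVecE_apply]
  simp [Matrix.diagonal, Finset.sum_ite_eq]

lemma mulVecE_add_smul {p q : ℕ} (A B : Matrix (Fin p) (Fin q) ℝ) (t : ℝ)
    (v : EuclideanSpace ℝ (Fin q)) :
    mulVecE (A + t • B) v = mulVecE A v + t • mulVecE B v := by
  ext i
  simp [mulVecE_apply, Finset.sum_add_distrib, Finset.mul_sum, add_mul, mul_assoc]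

lemma castId_self (p : ℕ) : castId p p = (1 : Matrix (Fin p) (Fin p) ℝ) := by
  ext i j
  simp [castId, Matrix.one_apply, Fin.val_eq_val]

lemma mulVecE_one {p : ℕ} (v : EuclideanSpace ℝ (Fin p)) :
    mulVecE (1 : Matrix (Fin p) (Fin p) ℝ) v = v := by
  ext i; simp [mulVecE_apply, Matrix.one_apply]



lemma segProd_zero {n : ℕ} (dims : ℕ → ℕ) (W : WeightFam n dims)
    (D : (j : ℕ) → Fin (dims j) → ℝ) (xx : EuclideanSpace ℝ (Fin (dims 0))) :
    mulVecE (segProdD dims W D 0 0) xx = xx := by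
  rw [segProdD, castId_self, mulVecE_one]

lemma segProd_step {n : ℕ} (dims : ℕ → ℕ) (W : WeightFam n dims)
    (D : (j : ℕ) → Fin (dims j) → ℝ) (b : ℕ) (hb : b < n)
    (xx : EuclideanSpace ℝ (Fin (dims 0))) :
    mulVecE (segProdD dims W D 0 (b + 1)) xx =
      dvecL (D (b + 1)) (mulVecE (W ⟨b, hb⟩) (mulVecE (segProdD dims W D 0 b) xx)) := by
  rw [segProdD, if_neg (by omega), dif_pos hb, mulVecE_mul, mulVecE_mul, mulVecE_diagonal]

def arrMulL {n d : ℕ} (dims : ℕ → ℕ) (arr : EuclideanSpace ℝ (Fin d) →ₗ[ℝ] WeightFam n dims)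
    (j : Fin n) :
    EuclideanSpace ℝ (Fin d) →L[ℝ]
      (EuclideanSpace ℝ (Fin (dims j.val)) →L[ℝ] EuclideanSpace ℝ (Fin (dims (j.val + 1)))) :=
  LinearMap.toContinuousLinearMap
    { toFun := fun θ => mulVecL (arr θ j)
      map_add' := fun u w => by
        ext v i
        simp [mulVecE_apply, Matrix.add_apply, add_mul, Finset.sum_add_distrib]
      map_smul' := fun r u => by
        ext v i
        simp [mulVecE_apply, Finset.mul_sum]
        exact Finset.sum_congr rfl fun k _ => by ring }

@[simp] lemma arrMulL_apply {n d : ℕ} (dims : ℕ → ℕ)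
    (arr : EuclideanSpace ℝ (Fin d) →ₗ[ℝ] WeightFam n dims) (j : Fin n)
    (θ : EuclideanSpace ℝ (Fin d)) (v : EuclideanSpace ℝ (Fin (dims j.val))) :
    arrMulL dims arr j θ v = mulVecE (arr θ j) v := rfl

lemma segCurve_contDiff {n d : ℕ} (dims : ℕ → ℕ)
    (arr : EuclideanSpace ℝ (Fin d) →ₗ[ℝ] WeightFam n dims)
    (D : (j : ℕ) → Fin (dims j) → ℝ) (xx : EuclideanSpace ℝ (Fin (dims 0))) :
    ∀ b ≤ n, ContDiff ℝ 2 (fun θ => mulVecE (segProdD dims (arr θ) D 0 b) xx) := by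
  intro b
  induction b with
  | zero =>
    intro _
    have : (fun θ : EuclideanSpace ℝ (Fin d) => mulVecE (segProdD dims (arr θ) D 0 0) xx)
        = fun _ => xx := by
      funext θ; rw [segProd_zero]
    rw [this]; exact contDiff_const
  | succ b ih =>
    intro hbn
    have hb : b < n := by omega
    have : (fun θ : EuclideanSpace ℝ (Fin d) => mulVecE (segProdD dims (arr θ) D 0 (b+1)) xx)
        = fun θ => dvecL (D (b+1)) ((arrMulL dims arr ⟨b, hb⟩ θ)
            (mulVecE (segProdD dims (arr θ) D 0 b) xx)) := by
      funext θ; rw [segProd_step dims (arr θ) D b hb]; rfl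
    rw [this]
    exact (dvecL (D (b+1))).contDiff.comp
      (((arrMulL dims arr ⟨b, hb⟩).contDiff).clm_apply (ih (by omega)))

/-- The key induction: derivatives and bounds for the curve
`t ↦ (segProdD of (W + t V)) x`. -/
lemma curve_deriv_bound {n : ℕ} (dims : ℕ → ℕ)
    (W V : WeightFam n dims) (Dd : (j : ℕ) → Fin (dims j) → ℝ)
    (c mm : ℝ) (hc : 0 ≤ c) (hm : 0 ≤ mm)
    (hDb : ∀ j, 1 ≤ j → j + 1 ≤ n → ∀ p, |Dd j p| ≤ c)
    (hDt : ∀ p, Dd n p = 1)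
    (hW : ∀ j : Fin n, frobNorm (W j) ≤ mm)
    (u : ℕ → ℝ) (hu0 : ∀ k, 0 ≤ u k)
    (hVu : ∀ (k : ℕ) (h : k < n), frobNorm (V ⟨k, h⟩) = u k)
    (xx : EuclideanSpace ℝ (Fin (dims 0))) :
    ∀ b ≤ n, ∃ g1 g2 : ℝ → EuclideanSpace ℝ (Fin (dims b)),
      (∀ t : ℝ, HasDerivAt
        (fun t : ℝ => mulVecE (segProdD dims (fun j => W j + t • V j) Dd 0 b) xx) (g1 t) t) ∧
      (∀ t : ℝ, HasDerivAt g1 (g2 t) t) ∧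
      ‖mulVecE (segProdD dims W Dd 0 b) xx‖ ≤
        (∏ k ∈ Finset.range b, (if k + 1 = n then 1 else c)) * mm ^ b * ‖xx‖ ∧
      ‖g1 0‖ * mm ≤ (∏ k ∈ Finset.range b, (if k + 1 = n then 1 else c)) * mm ^ b *
        (∑ k ∈ Finset.range b, u k) * ‖xx‖ ∧
      ‖g2 0‖ * mm ^ 2 ≤ (∏ k ∈ Finset.range b, (if k + 1 = n then 1 else c)) * mm ^ b *
        (∑ k ∈ Finset.range b, 2 * u k * (∑ l ∈ Finset.range k, u l)) * ‖xx‖ := by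
  intro b
  induction b with
  | zero =>
    intro _
    refine ⟨fun _ => 0, fun _ => 0, fun t => ?_, fun t => hasDerivAt_const _ _, ?_, ?_, ?_⟩
    · have : (fun t : ℝ => mulVecE (segProdD dims (fun j => W j + t • V j) Dd 0 0) xx)
          = fun _ => xx := by
        funext t; rw [segProd_zero]
      rw [this]; exact hasDerivAt_const _ _
    · rw [segProd_zero]; simp
    · simp
    · simp
  | succ b ih =>
    intro hbn
    have hb : b < n := by omega
    obtain ⟨g1, g2, hg1, hg2, hA, hB, hC⟩ := ih (by omega)
    set L1 := mulVecL (W ⟨b, hb⟩) with hL1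
    set L2 := mulVecL (V ⟨b, hb⟩) with hL2
    set Ld := dvecL (Dd (b + 1)) with hLd
    set w : ℝ → EuclideanSpace ℝ (Fin (dims b)) :=
      fun t => mulVecE (segProdD dims (fun j => W j + t • V j) Dd 0 b) xx with hw
    have hfun : (fun t : ℝ => mulVecE (segProdD dims (fun j => W j + t • V j) Dd 0 (b+1)) xx)
        = fun t => Ld (L1 (w t) + t • L2 (w t)) := by
      funext t
      rw [segProd_step dims _ Dd b hb, mulVecE_add_smul]
      rfl
    have hW0 : (fun j : Fin n => W j + (0:ℝ) • V j) = W := by funext j; simp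
    have hw0 : w 0 = mulVecE (segProdD dims W Dd 0 b) xx := by
      show mulVecE (segProdD dims (fun j => W j + (0:ℝ) • V j) Dd 0 b) xx = _
      rw [hW0]
    set cb : ℝ := if b + 1 = n then 1 else c with hcbdef
    have hcb : 0 ≤ cb := by rw [hcbdef]; split_ifs; exacts [zero_le_one, hc]
    have hLdb : ∀ z, ‖Ld z‖ ≤ cb * ‖z‖ := by
      intro z
      rcases eq_or_ne (b + 1) n with h | h
      · subst h
        rw [hcbdef, if_pos rfl]
        exact norm_dvecL_le _ 1 zero_le_one (fun p => by rw [hDt p]; simp) z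
      · rw [hcbdef, if_neg h]
        exact norm_dvecL_le _ c hc (hDb (b+1) (by omega) (by omega)) z
    have hL1b : ∀ z, ‖L1 z‖ ≤ mm * ‖z‖ := fun z =>
      (norm_mulVecE_le _ z).trans (mul_le_mul_of_nonneg_right (hW ⟨b, hb⟩) (norm_nonneg z))
    have hL2b : ∀ z, ‖L2 z‖ ≤ u b * ‖z‖ := fun z =>
      (norm_mulVecE_le _ z).trans (by rw [hVu b hb])
    have hP : (0:ℝ) ≤ ∏ k ∈ Finset.range b, (if k + 1 = n then 1 else c) :=
      Finset.prod_nonneg fun k _ => by split_ifs; exacts [zero_le_one, hc]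
    have hT : (0:ℝ) ≤ ∑ k ∈ Finset.range b, u k := Finset.sum_nonneg fun k _ => hu0 k
    have hxn : (0:ℝ) ≤ ‖xx‖ := norm_nonneg xx
    refine ⟨fun t => Ld (L1 (g1 t) + (t • L2 (g1 t) + L2 (w t))),
      fun t => Ld (L1 (g2 t) + ((t • L2 (g2 t) + L2 (g1 t)) + L2 (g1 t))), ?_, ?_, ?_, ?_, ?_⟩
    · intro t
      rw [hfun]
      have h1 : HasDerivAt (fun t => L1 (w t)) (L1 (g1 t)) t :=
        L1.hasFDerivAt.comp_hasDerivAt t (hg1 t)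
      have h2 : HasDerivAt (fun t => L2 (w t)) (L2 (g1 t)) t :=
        L2.hasFDerivAt.comp_hasDerivAt t (hg1 t)
      have h3 : HasDerivAt (fun s : ℝ => s • L2 (w s)) (t • L2 (g1 t) + (1:ℝ) • L2 (w t)) t := by
        exact (hasDerivAt_id' t).smul h2
      have h4 := (h1.add h3)
      have h5 := Ld.hasFDerivAt.comp_hasDerivAt t h4
      convert h5 using 2
      all_goals first | (simp; abel) | simp | rfl
      all_goals rfl
    · intro t
      have h1 : HasDerivAt (fun t => L1 (g1 t)) (L1 (g2 t)) t :=
        L1.hasFDerivAt.comp_hasDerivAt t (hg2 t)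
      have h2 : HasDerivAt (fun t => L2 (w t)) (L2 (g1 t)) t :=
        L2.hasFDerivAt.comp_hasDerivAt t (hg1 t)
      have h2' : HasDerivAt (fun t => L2 (g1 t)) (L2 (g2 t)) t :=
        L2.hasFDerivAt.comp_hasDerivAt t (hg2 t)
      have h3 : HasDerivAt (fun s : ℝ => s • L2 (g1 s)) (t • L2 (g2 t) + (1:ℝ) • L2 (g1 t)) t := by
        exact (hasDerivAt_id' t).smul h2'
      have h4 := h1.add (h2.add h3)
      have h5 := Ld.hasFDerivAt.comp_hasDerivAt t h4
      convert h5 using 2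
      all_goals first | (simp; abel) | simp | rfl
      all_goals rfl
    · -- bound A
      rw [segProd_step dims W Dd b hb, Finset.prod_range_succ, ← hcbdef]
      calc ‖Ld (mulVecE (W ⟨b, hb⟩) (mulVecE (segProdD dims W Dd 0 b) xx))‖
          ≤ cb * ‖L1 (mulVecE (segProdD dims W Dd 0 b) xx)‖ := hLdb _
        _ ≤ cb * (mm * ‖mulVecE (segProdD dims W Dd 0 b) xx‖) :=
            mul_le_mul_of_nonneg_left (hL1b _) hcb
        _ ≤ cb * (mm * ((∏ k ∈ Finset.range b, (if k + 1 = n then 1 else c)) * mm ^ b * ‖xx‖)) :=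
            mul_le_mul_of_nonneg_left (mul_le_mul_of_nonneg_left hA hm) hcb
        _ = (∏ k ∈ Finset.range b, (if k + 1 = n then 1 else c)) * cb * mm ^ (b + 1) * ‖xx‖ := by
            ring
    · -- bound B
      rw [Finset.prod_range_succ, Finset.sum_range_succ, ← hcbdef]
      simp only [zero_smul, zero_add]
      have key : ‖Ld (L1 (g1 0) + L2 (w 0))‖ ≤ cb * (mm * ‖g1 0‖ + u b * ‖w 0‖) :=
        (hLdb _).trans (mul_le_mul_of_nonneg_left
          ((norm_add_le _ _).trans (add_le_add (hL1b _) (hL2b _))) hcb)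
      calc ‖Ld (L1 (g1 0) + L2 (w 0))‖ * mm
          ≤ (cb * (mm * ‖g1 0‖ + u b * ‖w 0‖)) * mm :=
            mul_le_mul_of_nonneg_right key hm
        _ = cb * (mm * (‖g1 0‖ * mm) + (u b * mm) * ‖w 0‖) := by ring
        _ ≤ cb * (mm * ((∏ k ∈ Finset.range b, (if k + 1 = n then 1 else c)) * mm ^ b *
              (∑ k ∈ Finset.range b, u k) * ‖xx‖) +
              (u b * mm) * ((∏ k ∈ Finset.range b, (if k + 1 = n then 1 else c)) * mm ^ b * ‖xx‖)) := by
            refine mul_le_mul_of_nonneg_left (add_le_add (mul_le_mul_of_nonneg_left hB hm) ?_) hcb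
            rw [hw0]
            exact mul_le_mul_of_nonneg_left hA (mul_nonneg (hu0 b) hm)
        _ = (∏ k ∈ Finset.range b, (if k + 1 = n then 1 else c)) * cb * mm ^ (b + 1) *
              ((∑ k ∈ Finset.range b, u k) + u b) * ‖xx‖ := by ring
    · -- bound C
      rw [Finset.prod_range_succ, Finset.sum_range_succ, ← hcbdef]
      simp only [zero_smul, zero_add]
      have key : ‖Ld (L1 (g2 0) + (L2 (g1 0) + L2 (g1 0)))‖
          ≤ cb * (mm * ‖g2 0‖ + (u b * ‖g1 0‖ + u b * ‖g1 0‖)) :=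
        (hLdb _).trans (mul_le_mul_of_nonneg_left
          ((norm_add_le _ _).trans (add_le_add (hL1b _)
            ((norm_add_le _ _).trans (add_le_add (hL2b _) (hL2b _))))) hcb)
      calc ‖Ld (L1 (g2 0) + (L2 (g1 0) + L2 (g1 0)))‖ * mm ^ 2
          ≤ (cb * (mm * ‖g2 0‖ + (u b * ‖g1 0‖ + u b * ‖g1 0‖))) * mm ^ 2 :=
            mul_le_mul_of_nonneg_right key (by positivity)
        _ = cb * (mm * (‖g2 0‖ * mm ^ 2) + 2 * (u b * mm) * (‖g1 0‖ * mm)) := by ring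
        _ ≤ cb * (mm * ((∏ k ∈ Finset.range b, (if k + 1 = n then 1 else c)) * mm ^ b *
              (∑ k ∈ Finset.range b, 2 * u k * (∑ l ∈ Finset.range k, u l)) * ‖xx‖) +
              2 * (u b * mm) * ((∏ k ∈ Finset.range b, (if k + 1 = n then 1 else c)) * mm ^ b *
              (∑ k ∈ Finset.range b, u k) * ‖xx‖)) := by
            refine mul_le_mul_of_nonneg_left (add_le_add (mul_le_mul_of_nonneg_left hC hm) ?_) hcb
            exact mul_le_mul_of_nonneg_left hB
              (mul_nonneg zero_le_two (mul_nonneg (hu0 b) hm))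
        _ = (∏ k ∈ Finset.range b, (if k + 1 = n then 1 else c)) * cb * mm ^ (b + 1) *
              ((∑ k ∈ Finset.range b, 2 * u k * (∑ l ∈ Finset.range k, u l)) +
                2 * u b * (∑ k ∈ Finset.range b, u k)) * ‖xx‖ := by ring


section Bridge
variable {E : Type*} [NormedAddCommGroup E] [InnerProductSpace ℝ E] [CompleteSpace E]

/-- `(toDual ℝ E).symm` as a continuous linear map. -/
def dualIso (E : Type*) [NormedAddCommGroup E] [InnerProductSpace ℝ E] [CompleteSpace E] :
    StrongDual ℝ E →L[ℝ] E where
  toFun := fun φ => (InnerProductSpace.toDual ℝ E).symm φ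
  map_add' := fun a b => map_add _ a b
  map_smul' := fun r a => by
    simp [LinearIsometryEquiv.map_smulₛₗ, starRingEnd_apply, star_trivial]
  cont := (InnerProductSpace.toDual ℝ E).symm.continuous

lemma gradient_eq_dualIso (f : E → ℝ) :
    gradient f = fun z => dualIso E (fderiv ℝ f z) := rfl

lemma inner_dualIso (φ : StrongDual ℝ E) (w : E) :
    ⟪dualIso E φ, w⟫ = φ w := InnerProductSpace.toDual_symm_apply

lemma hessQ_eq_of_eventuallyEq {f g : E → ℝ} {θ : E} (h : f =ᶠ[𝓝 θ] g) (v : E) :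
    hessQ f θ v = hessQ g θ v := by
  unfold hessQ
  rw [Filter.EventuallyEq.fderiv_eq (Filter.EventuallyEq.gradient h)]

lemma hessQ_eq_second_fderiv {g : E → ℝ} (hg : ContDiff ℝ 2 g) (θ v : E) :
    hessQ g θ v = (fderiv ℝ (fderiv ℝ g) θ v) v := by
  have hH : HasFDerivAt (fderiv ℝ g) (fderiv ℝ (fderiv ℝ g) θ) θ :=
    (((hg.fderiv_right (m := 1) (by norm_num)).differentiable (by norm_num)) θ).hasFDerivAt
  have hG : HasFDerivAt (gradient g) ((dualIso E).comp (fderiv ℝ (fderiv ℝ g) θ)) θ := by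
    rw [gradient_eq_dualIso]
    exact (dualIso E).hasFDerivAt.comp θ hH
  unfold hessQ
  rw [hG.fderiv]
  rw [real_inner_comm]
  exact inner_dualIso _ _

lemma hasDerivAt_line (θ v : E) (t : ℝ) :
    HasDerivAt (fun t : ℝ => θ + t • v) v t := by
  simpa using ((hasDerivAt_id t).smul_const v).const_add θ

lemma hasDerivAt_fderiv_line {g : E → ℝ} (hg : ContDiff ℝ 2 g) (θ v : E) :
    HasDerivAt (fun t : ℝ => fderiv ℝ g (θ + t • v) v)
      ((fderiv ℝ (fderiv ℝ g) θ v) v) 0 := by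
  have hH : HasFDerivAt (fderiv ℝ g) (fderiv ℝ (fderiv ℝ g) θ) (θ + (0:ℝ) • v) := by
    rw [zero_smul, add_zero]
    exact (((hg.fderiv_right (m := 1) (by norm_num)).differentiable (by norm_num)) θ).hasFDerivAt
  have hc : HasDerivAt (fun t : ℝ => fderiv ℝ g (θ + t • v))
      (fderiv ℝ (fderiv ℝ g) θ v) 0 := hH.comp_hasDerivAt 0 (hasDerivAt_line θ v 0)
  have := hc.clm_apply (hasDerivAt_const (0:ℝ) v)
  simpa using this

lemma hasDerivAt_comp_line {g : E → ℝ} (hg : ContDiff ℝ 2 g) (θ v : E) (t : ℝ) :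
    HasDerivAt (fun t : ℝ => g (θ + t • v)) (fderiv ℝ g (θ + t • v) v) t :=
  ((hg.differentiable (by norm_num) _).hasFDerivAt).comp_hasDerivAt t (hasDerivAt_line θ v t)

lemma nonneg_deriv_of_monotone {ψ : ℝ → ℝ} (hm : Monotone ψ) {d : ℝ}
    (hd : HasDerivAt ψ d 0) : 0 ≤ d := by
  rw [hasDerivAt_iff_tendsto_slope] at hd
  have hle : Tendsto (slope ψ 0) (nhdsWithin 0 (Set.Ioi 0)) (nhds d) :=
    hd.mono_left (nhdsWithin_mono 0 (fun x hx => ne_of_gt hx))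
  refine ge_of_tendsto hle ?_
  filter_upwards [self_mem_nhdsWithin] with x hx
  have hx0 : (0:ℝ) < x := hx
  have : ψ 0 ≤ ψ x := hm (le_of_lt hx0)
  rw [slope_def_field]
  exact div_nonneg (by linarith) (by linarith)

lemma convex_second_deriv_nonneg {g : E → ℝ} (hg : ContDiff ℝ 2 g)
    (hconv : ConvexOn ℝ Set.univ g) (w0 a : E) :
    0 ≤ (fderiv ℝ (fderiv ℝ g) w0 a) a := by
  set ψ : ℝ → ℝ := fun s => fderiv ℝ g (w0 + s • a) a with hψ
  have hd : HasDerivAt ψ ((fderiv ℝ (fderiv ℝ g) w0 a) a) 0 := hasDerivAt_fderiv_line hg w0 a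
  refine nonneg_deriv_of_monotone ?_ hd
  -- ψ is the derivative of the convex function h = g ∘ (line)
  set h : ℝ → ℝ := fun s => g (w0 + s • a) with hh
  have hderiv : ∀ s, HasDerivAt h (ψ s) s := fun s => hasDerivAt_comp_line hg w0 a s
  have hhconv : ConvexOn ℝ Set.univ h := by
    have := hconv.comp_affineMap (AffineMap.lineMap w0 (w0 + a))
    have heq : (g ∘ (AffineMap.lineMap w0 (w0 + a) : ℝ →ᵃ[ℝ] E)) = h := by
      funext s
      simp [hh, AffineMap.lineMap_apply, add_comm]
    have hpre : (AffineMap.lineMap w0 (w0 + a) : ℝ →ᵃ[ℝ] E) ⁻¹' Set.univ = Set.univ :=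
      Set.preimage_univ
    rw [hpre] at this
    rwa [heq] at this
  have hmono : Monotone (deriv h) := by
    refine monotoneOn_univ.mp ?_
    exact hhconv.monotoneOn_deriv fun x _ => (hderiv x).differentiableAt
  have : deriv h = ψ := funext fun s => (hderiv s).deriv
  rwa [this] at hmono

end Bridge

lemma sq_sum_split (u : ℕ → ℝ) (b : ℕ) :
    (∑ k ∈ Finset.range b, u k) ^ 2 =
      (∑ k ∈ Finset.range b, u k ^ 2) +
        ∑ k ∈ Finset.range b, 2 * u k * ∑ l ∈ Finset.range k, u l := by
  induction b with
  | zero => simp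
  | succ b ih =>
    rw [Finset.sum_range_succ, Finset.sum_range_succ (fun k => u k ^ 2),
      Finset.sum_range_succ (fun k => 2 * u k * ∑ l ∈ Finset.range k, u l)]
    nlinarith [ih]






lemma patLoss_contDiff {Y : Type*} {s : ℕ} {n d : ℕ} (dims : ℕ → ℕ)
    (loss : EuclideanSpace ℝ (Fin (dims n)) → Y → ℝ)
    (x : Fin s → EuclideanSpace ℝ (Fin (dims 0))) (y : Fin s → Y)
    (D : Fin s → (j : ℕ) → Fin (dims j) → ℝ)
    (arr : EuclideanSpace ℝ (Fin d) →ₗ[ℝ] WeightFam n dims)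
    (hsm : ∀ yy : Y, ContDiff ℝ 2 (fun v => loss v yy)) :
    ContDiff ℝ 2 (patLoss dims loss x y D arr) := by
  unfold patLoss
  exact contDiff_const.mul (ContDiff.sum fun i _ =>
    (hsm (y i)).comp (segCurve_contDiff dims arr (D i) (x i) n le_rfl))

/-- Proposition 5 of the paper: lower bound on the minimal eigenvalue of
the Hessian of the training loss of a fully connected network with homogeneous non-linear
activation, at a point where the loss coincides with a fixed-activation-pattern function on
an open neighborhood and whose weight matrices are approximately balanced (a condition
conserved along gradient flow trajectories emanating from points of norm at most `ε`). -/
theorem relu_net_hessian_min_eig_lower_bound_balanced {n d : ℕ} (hn : 2 ≤ n)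
    (dims : ℕ → ℕ) (α α' : ℝ) (hα : α ≠ α')
    {Y : Type*} (s : ℕ) (hs : 0 < s)
    (x : Fin s → EuclideanSpace ℝ (Fin (dims 0))) (y : Fin s → Y)
    (loss : EuclideanSpace ℝ (Fin (dims n)) → Y → ℝ)
    (hconv : ∀ yy : Y, ConvexOn ℝ Set.univ (fun v => loss v yy))
    (hsm : ∀ yy : Y, ContDiff ℝ 2 (fun v => loss v yy))
    (arr : EuclideanSpace ℝ (Fin d) →ₗ[ℝ] WeightFam n dims)
    (harr : Function.Bijective arr)
    (hinner : ∀ u v : EuclideanSpace ℝ (Fin d), ⟪u, v⟫ =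
      ∑ j : Fin n, ∑ p : Fin (dims (j.val + 1)), ∑ q : Fin (dims j.val),
        arr u j p q * arr v j p q)
    (D : Fin s → (j : ℕ) → Fin (dims j) → ℝ)
    (hD : ∀ i j, 1 ≤ j → j + 1 ≤ n → ∀ p, D i j p = α ∨ D i j p = α')
    (hDtop : ∀ i p, D i n p = 1)
    (θ : EuclideanSpace ℝ (Fin d))
    (hcoin : ∃ U : Set (EuclideanSpace ℝ (Fin d)), IsOpen U ∧ θ ∈ U ∧
      ∀ θ'' ∈ U, netLossNL dims α α' loss x y arr θ'' = patLoss dims loss x y D arr θ'')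
    (ε : ℝ) (hε : 0 < ε)
    (hbal : ∀ j j' : Fin n,
      |frobNorm (arr θ j') ^ 2 - frobNorm (arr θ j) ^ 2| ≤ ε ^ 2) :
    ∀ v : EuclideanSpace ℝ (Fin d),
      -((max |α| |α'|) ^ (n - 1) * (((n : ℝ) - 1) / (s : ℝ)) *
          (∑ i, ‖gradient (fun u => loss u (y i))
              (mulVecE (segProdD dims (arr θ) (D i) 0 n) (x i))‖ * ‖x i‖) *
          (sInf {r : ℝ | ∃ j : Fin n, r = frobNorm (arr θ j)} + ε) ^ (n - 2)) *
        ‖v‖ ^ 2 ≤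
      hessQ (netLossNL dims α α' loss x y arr) θ v := by
  intro v
  obtain ⟨U, hUopen, hθU, hUeq⟩ := hcoin
  set Φ := patLoss dims loss x y D arr with hΦdef
  have hΦ : ContDiff ℝ 2 Φ := patLoss_contDiff dims loss x y D arr hsm
  have h_ev : netLossNL dims α α' loss x y arr =ᶠ[nhds θ] Φ :=
    Filter.eventuallyEq_of_mem (hUopen.mem_nhds hθU) hUeq
  rw [hessQ_eq_of_eventuallyEq h_ev v, hessQ_eq_second_fderiv hΦ θ v]
  -- constants
  set c : ℝ := max |α| |α'| with hcdef
  have hc : 0 ≤ c := le_trans (abs_nonneg α) (le_max_left _ _)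
  set S : Set ℝ := {r : ℝ | ∃ j : Fin n, r = frobNorm (arr θ j)} with hSdef
  set mm : ℝ := sInf S + ε with hmmdef
  have hSne : S.Nonempty := ⟨frobNorm (arr θ ⟨0, by omega⟩), ⟨⟨0, by omega⟩, rfl⟩⟩
  have hSfin : S.Finite := by
    have : S = Set.range (fun j : Fin n => frobNorm (arr θ j)) := by
      ext r; simp [hSdef, eq_comm]
    rw [this]; exact Set.finite_range _
  obtain ⟨j₀, hj₀⟩ : ∃ j₀ : Fin n, sInf S = frobNorm (arr θ j₀) := hSne.csInf_mem hSfin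
  have hm : 0 ≤ mm := by
    rw [hmmdef, hj₀]
    have := frobNorm_nonneg (arr θ j₀)
    linarith
  have hmpos : 0 < mm := by
    rw [hmmdef, hj₀]
    have := frobNorm_nonneg (arr θ j₀)
    linarith
  have hWm : ∀ j : Fin n, frobNorm (arr θ j) ≤ mm := by
    intro j
    have h1 := (abs_le.mp (hbal j₀ j)).2
    rw [hmmdef, hj₀]
    nlinarith [frobNorm_nonneg (arr θ j), frobNorm_nonneg (arr θ j₀), hε.le]
  have hDb : ∀ i : Fin s, ∀ jj, 1 ≤ jj → jj + 1 ≤ n → ∀ p, |D i jj p| ≤ c := by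
    intro i jj h1 h2 p
    rcases hD i jj h1 h2 p with h | h <;> rw [h, hcdef]
    · exact le_max_left _ _
    · exact le_max_right _ _
  -- the direction data
  set u : ℕ → ℝ := fun k => if h : k < n then frobNorm (arr v ⟨k, h⟩) else 0 with hudef
  have hu0 : ∀ k, 0 ≤ u k := by
    intro k; rw [hudef]; dsimp only
    split_ifs
    · exact frobNorm_nonneg _
    · exact le_refl 0
  have hVu : ∀ (k : ℕ) (h : k < n), frobNorm (arr v ⟨k, h⟩) = u k := by
    intro k h; rw [hudef]; simp [h]
  -- per-sample curves
  have H : ∀ i : Fin s, ∃ g1 g2 : ℝ → EuclideanSpace ℝ (Fin (dims n)),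
      (∀ t : ℝ, HasDerivAt
        (fun t : ℝ =>
          mulVecE (segProdD dims (fun j => arr θ j + t • arr v j) (D i) 0 n) (x i)) (g1 t) t) ∧
      (∀ t : ℝ, HasDerivAt g1 (g2 t) t) ∧
      ‖mulVecE (segProdD dims (arr θ) (D i) 0 n) (x i)‖ ≤
        (∏ k ∈ Finset.range n, (if k + 1 = n then 1 else c)) * mm ^ n * ‖x i‖ ∧
      ‖g1 0‖ * mm ≤ (∏ k ∈ Finset.range n, (if k + 1 = n then 1 else c)) * mm ^ n *
        (∑ k ∈ Finset.range n, u k) * ‖x i‖ ∧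
      ‖g2 0‖ * mm ^ 2 ≤ (∏ k ∈ Finset.range n, (if k + 1 = n then 1 else c)) * mm ^ n *
        (∑ k ∈ Finset.range n, 2 * u k * (∑ l ∈ Finset.range k, u l)) * ‖x i‖ :=
    fun i => curve_deriv_bound dims (arr θ) (arr v) (D i) c mm hc hm
      (hDb i) (hDtop i) hWm u hu0 hVu (x i) n le_rfl
  choose g1 g2 hg1 hg2 hA hB hC using H
  -- analytic bridge
  have hdiffgl : ∀ i : Fin s, Differentiable ℝ (fun u => loss u (y i)) :=
    fun i => (hsm (y i)).differentiable (by norm_num)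
  have hH2 : ∀ (i : Fin s) (z : EuclideanSpace ℝ (Fin (dims n))),
      HasFDerivAt (fderiv ℝ (fun u => loss u (y i)))
        (fderiv ℝ (fderiv ℝ (fun u => loss u (y i))) z) z :=
    fun i z => ((((hsm (y i)).fderiv_right (m := 1) (by norm_num)).differentiable (by norm_num)) z).hasFDerivAt
  have harr_line : ∀ t : ℝ, (fun j : Fin n => arr θ j + t • arr v j) = arr (θ + t • v) := by
    intro t; funext j
    rw [map_add, _root_.map_smul]
    rfl
  have hfunline : (fun t : ℝ => Φ (θ + t • v))
      = fun t => (1 / (s:ℝ)) * ∑ i, loss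
          (mulVecE (segProdD dims (fun j => arr θ j + t • arr v j) (D i) 0 n) (x i)) (y i) := by
    funext t
    rw [hΦdef]
    unfold patLoss
    congr 1
    refine Finset.sum_congr rfl fun i _ => ?_
    rw [← harr_line t]
  have hD1 : ∀ t : ℝ, HasDerivAt (fun t : ℝ => Φ (θ + t • v))
      ((1 / (s:ℝ)) * ∑ i, fderiv ℝ (fun u => loss u (y i))
        (mulVecE (segProdD dims (fun j => arr θ j + t • arr v j) (D i) 0 n) (x i))
        (g1 i t)) t := by
    intro t
    rw [hfunline]
    exact HasDerivAt.const_mul _ (HasDerivAt.fun_sum fun i _ =>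
      ((hdiffgl i _).hasFDerivAt).comp_hasDerivAt t (hg1 i t))
  have hFd1eq : (fun t : ℝ => (1 / (s:ℝ)) * ∑ i, fderiv ℝ (fun u => loss u (y i))
        (mulVecE (segProdD dims (fun j => arr θ j + t • arr v j) (D i) 0 n) (x i))
        (g1 i t))
      = fun t => fderiv ℝ Φ (θ + t • v) v :=
    funext fun t => (hD1 t).unique (hasDerivAt_comp_line hΦ θ v t)
  have hD2 : HasDerivAt (fun t : ℝ => (1 / (s:ℝ)) * ∑ i, fderiv ℝ (fun u => loss u (y i))
        (mulVecE (segProdD dims (fun j => arr θ j + t • arr v j) (D i) 0 n) (x i))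
        (g1 i t))
      ((1 / (s:ℝ)) * ∑ i, (fderiv ℝ (fderiv ℝ (fun u => loss u (y i)))
          (mulVecE (segProdD dims (fun j => arr θ j + (0:ℝ) • arr v j) (D i) 0 n) (x i))
          (g1 i 0) (g1 i 0)
        + fderiv ℝ (fun u => loss u (y i))
          (mulVecE (segProdD dims (fun j => arr θ j + (0:ℝ) • arr v j) (D i) 0 n) (x i))
          (g2 i 0))) 0 := by
    refine HasDerivAt.const_mul _ (HasDerivAt.fun_sum fun i _ => ?_)
    exact ((hH2 i _).comp_hasDerivAt 0 (hg1 i 0)).clm_apply (hg2 i 0)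
  rw [hFd1eq] at hD2
  have hkey := hD2.unique (hasDerivAt_fderiv_line hΦ θ v)
  rw [← hkey]
  -- simplify the base point
  have hzero : (fun j : Fin n => arr θ j + (0:ℝ) • arr v j) = arr θ := by
    funext j; simp
  simp only [hzero] at *
  -- numeric bounds
  obtain ⟨m, hmn⟩ : ∃ m, n = m + 1 := ⟨n - 1, by omega⟩
  have hprod : (∏ k ∈ Finset.range n, (if k + 1 = n then 1 else c)) = c ^ (n - 1) := by
    subst hmn
    rw [Finset.prod_range_succ, if_pos rfl, mul_one,
      Finset.prod_congr rfl (fun k hk => if_neg (by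
        have := Finset.mem_range.mp hk; omega)),
      Finset.prod_const, Finset.card_range]
    congr 1
  have hQ : (∑ k ∈ Finset.range n, u k ^ 2) = ‖v‖ ^ 2 := by
    have h1 : (∑ k ∈ Finset.range n, u k ^ 2) = ∑ j : Fin n, u (j:ℕ) ^ 2 :=
      (Fin.sum_univ_eq_sum_range (fun k => u k ^ 2) n).symm
    have h2 : ∀ j : Fin n, u (j : ℕ) ^ 2 = ∑ p, ∑ q, arr v j p q * arr v j p q := by
      intro j
      rw [← hVu (j:ℕ) j.isLt, frobNorm, Real.sq_sqrt (by positivity)]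
      simp [Fin.eta, sq]
    rw [h1, Finset.sum_congr rfl fun j _ => h2 j, ← hinner v v, real_inner_self_eq_norm_sq]
  have hT2 : (∑ k ∈ Finset.range n, u k) ^ 2 ≤ (n:ℝ) * ∑ k ∈ Finset.range n, u k ^ 2 := by
    have h := sq_sum_le_card_mul_sum_sq (s := Finset.range n) (f := u)
    simpa using h
  have hR : (∑ k ∈ Finset.range n, 2 * u k * ∑ l ∈ Finset.range k, u l)
      ≤ ((n:ℝ) - 1) * ‖v‖ ^ 2 := by
    have hsplit := sq_sum_split u n
    rw [hQ] at hsplit hT2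
    linarith
  have hg2bound : ∀ i : Fin s, ‖g2 i 0‖ ≤
      c ^ (n-1) * mm ^ (n-2) * (((n:ℝ) - 1) * ‖v‖ ^ 2) * ‖x i‖ := by
    intro i
    have h1 := hC i
    rw [hprod] at h1
    have hmmpow : mm ^ n = mm ^ (n - 2) * mm ^ 2 := by
      rw [← pow_add]; congr 1; omega
    rw [hmmpow] at h1
    have hm2 : (0:ℝ) < mm ^ 2 := by positivity
    have h2 : ‖g2 i 0‖ ≤ c ^ (n-1) * mm ^ (n-2) *
        (∑ k ∈ Finset.range n, 2 * u k * ∑ l ∈ Finset.range k, u l) * ‖x i‖ := by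
      rw [← mul_le_mul_iff_of_pos_right hm2]
      calc ‖g2 i 0‖ * mm ^ 2
          ≤ c ^ (n-1) * (mm ^ (n-2) * mm ^ 2) *
            (∑ k ∈ Finset.range n, 2 * u k * ∑ l ∈ Finset.range k, u l) * ‖x i‖ := h1
        _ = c ^ (n-1) * mm ^ (n-2) *
            (∑ k ∈ Finset.range n, 2 * u k * ∑ l ∈ Finset.range k, u l) * ‖x i‖ * mm ^ 2 := by
            ring
    refine h2.trans ?_
    have hpref : (0:ℝ) ≤ c ^ (n-1) * mm ^ (n-2) := by positivity
    exact mul_le_mul_of_nonneg_right (mul_le_mul_of_nonneg_left hR hpref) (norm_nonneg (x i))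
  have hstep : ∀ i : Fin s,
      -(‖gradient (fun u => loss u (y i))
          (mulVecE (segProdD dims (arr θ) (D i) 0 n) (x i))‖ * ‖x i‖ *
        (c ^ (n-1) * mm ^ (n-2) * (((n:ℝ) - 1) * ‖v‖ ^ 2)))
        ≤ fderiv ℝ (fderiv ℝ (fun u => loss u (y i)))
            (mulVecE (segProdD dims (arr θ) (D i) 0 n) (x i)) (g1 i 0) (g1 i 0)
          + fderiv ℝ (fun u => loss u (y i))
            (mulVecE (segProdD dims (arr θ) (D i) 0 n) (x i)) (g2 i 0) := by
    intro i
    have hq := convex_second_deriv_nonneg (hsm (y i)) (hconv (y i))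
      (mulVecE (segProdD dims (arr θ) (D i) 0 n) (x i)) (g1 i 0)
    have hip : ⟪gradient (fun u => loss u (y i))
        (mulVecE (segProdD dims (arr θ) (D i) 0 n) (x i)), g2 i 0⟫
        = fderiv ℝ (fun u => loss u (y i))
          (mulVecE (segProdD dims (arr θ) (D i) 0 n) (x i)) (g2 i 0) := by
      rw [gradient_eq_dualIso]
      exact inner_dualIso _ _
    have habs := abs_real_inner_le_norm (gradient (fun u => loss u (y i))
      (mulVecE (segProdD dims (arr θ) (D i) 0 n) (x i))) (g2 i 0)
    have hlow := (abs_le.mp habs).1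
    have hnb := mul_le_mul_of_nonneg_left (hg2bound i)
      (norm_nonneg (gradient (fun u => loss u (y i))
        (mulVecE (segProdD dims (arr θ) (D i) 0 n) (x i))))
    rw [hip] at hlow
    nlinarith [hq]
  have hsum := Finset.sum_le_sum (fun i (_ : i ∈ Finset.univ) => hstep i)
  have hfrac : (0:ℝ) ≤ 1 / (s:ℝ) := by positivity
  have hfin := mul_le_mul_of_nonneg_left hsum hfrac
  refine le_trans (le_of_eq ?_) hfin
  rw [Finset.sum_neg_distrib, ← Finset.sum_mul]
  ring
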